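/- arXiv:0806.1271 — 5 statements merged into one kernel-verified Lean document; each statement's English description precedes it below -/
import Mathlib

section
/- Let T be a tiling of Z^d with prototile N = {n_1,…,n_m}. Define the schedule σ : Z^d → Fin m by σ(t + n_k) = k (well-defined by the tiling property). Then this schedule is collision-free: for any two distinct points x, y ∈ Z^d with σ(x) = σ(y), the sets x+N and y+N are disjoint. -/
/-- The ptrans `a + N` of a prototile `N` by `a`, as a set. -/
def ptrans {d : ℕ} (a : Fin d → ℤ) (N : Finset (Fin d → ℤ)) : Set (Fin d → ℤ) :=
  (a + ·) '' ↑N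

/-- `T` is a tiling of `ℤ^d` with prototile `N`: translates `t+N` (`t ∈ T`)
cover `ℤ^d` and are pairwise disjoint. -/
def IsTiling {d : ℕ} (T : Set (Fin d → ℤ)) (N : Finset (Fin d → ℤ)) : Prop :=
  (⋃ t ∈ T, ptrans t N) = Set.univ ∧
    ∀ s ∈ T, ∀ t ∈ T, s ≠ t → ptrans s N ∩ ptrans t N = ∅

/-- A schedule is collision-free if distinct points with the same slot have
disjoint translated neighborhoods. -/
def CollisionFree {d m : ℕ} (σ : (Fin d → ℤ) → Fin m) (N : Finset (Fin d → ℤ)) : Prop :=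
  ∀ x y : Fin d → ℤ, x ≠ y → σ x = σ y → ptrans x N ∩ ptrans y N = ∅

theorem tiling_schedule_collisionFree {d m : ℕ} (N : Finset (Fin d → ℤ))
    (h0 : (0 : Fin d → ℤ) ∈ N) (T : Set (Fin d → ℤ)) (hT : IsTiling T N)
    (e : Fin m ≃ {n // n ∈ N}) (σ : (Fin d → ℤ) → Fin m)
    (hσ : ∀ t ∈ T, ∀ k : Fin m, σ (t + (e k).1) = k) :
    CollisionFree σ N := by
  obtain ⟨hcov, hdisj⟩ := hT
  intro x y hxy hσxy
  -- find tiles containing x and y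
  have hx : x ∈ ⋃ t ∈ T, ptrans t N := by rw [hcov]; trivial
  have hy : y ∈ ⋃ t ∈ T, ptrans t N := by rw [hcov]; trivial
  simp only [Set.mem_iUnion] at hx hy
  obtain ⟨t, htT, nx, hnx, hxt⟩ := hx
  obtain ⟨s, hsT, ny, hny, hys⟩ := hy
  have hσx : σ x = e.symm ⟨nx, hnx⟩ := by
    rw [← hxt]
    have := hσ t htT (e.symm ⟨nx, hnx⟩)
    simpa using this
  have hσy : σ y = e.symm ⟨ny, hny⟩ := by
    rw [← hys]
    have := hσ s hsT (e.symm ⟨ny, hny⟩)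
    simpa using this
  have hn : nx = ny := by
    have h2 : (⟨nx, hnx⟩ : {n // n ∈ N}) = ⟨ny, hny⟩ :=
      e.symm.injective (by rw [← hσx, ← hσy, hσxy])
    exact congrArg Subtype.val h2
  have hts : t ≠ s := by
    intro h
    apply hxy
    rw [← hxt, ← hys, h, hn]
  ext z
  simp only [Set.mem_inter_iff, Set.mem_empty_iff_false, iff_false, not_and]
  rintro ⟨a, ha, rfl⟩ ⟨b, hb, hz⟩
  -- x + a = y + b; with x = t + n, y = s + n, cancel n: t + a = s + b
  have key : t + a = s + b := by
    have hxt' : t + nx = x := hxt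
    have hys' : s + ny = y := hys
    have hz' : y + b = x + a := hz
    have : t + nx + a = s + nx + b := by
      rw [hxt', hn, hys']; exact hz'.symm
    funext i
    have := congrFun this i
    simp only [Pi.add_apply] at this ⊢
    omega
  have h1 : t + a ∈ ptrans t N := ⟨a, ha, rfl⟩
  have h2 : t + a ∈ ptrans s N := ⟨b, hb, key.symm⟩
  have := hdisj t htT s hsT hts
  have : t + a ∈ ptrans t N ∩ ptrans s N := ⟨h1, h2⟩
  rw [hdisj t htT s hsT hts] at this
  exact this
end

section
/- Let T be a tiling of Z^d with prototile N of size m. Then there exists a collision-free schedule σ : Z^d → Fin m, and no collision-free schedule exists with fewer than m time slots. Hence the minimal number of time slots of a collision-free schedule equals |N|. -/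
lemma mem_ptrans {d : ℕ} {a z : Fin d → ℤ} {N : Finset (Fin d → ℤ)} :
    z ∈ ptrans a N ↔ ∃ n ∈ N, a + n = z := by
  exact Iff.rfl

theorem tiling_optimal_schedule {d m : ℕ} (N : Finset (Fin d → ℤ))
    (h0 : (0 : Fin d → ℤ) ∈ N) (hm : N.card = m)
    (T : Set (Fin d → ℤ)) (hT : IsTiling T N) :
    (∃ σ : (Fin d → ℤ) → Fin m, CollisionFree σ N) ∧
      ∀ m₀ : ℕ, (∃ σ : (Fin d → ℤ) → Fin m₀, CollisionFree σ N) → m ≤ m₀ := by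
  constructor
  · -- existence
    have hcov : ∀ x : Fin d → ℤ, ∃ t, t ∈ T ∧ ∃ n : N, t + (n : Fin d → ℤ) = x := by
      intro x
      have : x ∈ ⋃ t ∈ T, ptrans t N := hT.1 ▸ Set.mem_univ x
      rcases Set.mem_iUnion₂.mp this with ⟨t, ht, hx⟩
      rcases mem_ptrans.mp hx with ⟨n, hn, hnx⟩
      exact ⟨t, ht, ⟨n, hn⟩, hnx⟩
    choose t ht n hn using hcov
    let e : {x // x ∈ N} ≃ Fin m := N.equivFin.trans (finCongr hm)
    refine ⟨fun x => e (n x), ?_⟩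
    intro x y hxy hσ
    have hnxy : n x = n y := e.injective hσ
    have htxy : t x ≠ t y := by
      intro h
      apply hxy
      rw [← hn x, ← hn y, h, hnxy]
    have hdisj := hT.2 (t x) (ht x) (t y) (ht y) htxy
    ext z
    simp only [Set.mem_inter_iff, Set.mem_empty_iff_false, iff_false, not_and]
    intro hzx hzy
    rcases mem_ptrans.mp hzx with ⟨a, ha, hza⟩
    rcases mem_ptrans.mp hzy with ⟨b, hb, hzb⟩
    have h1 : z - (n x : Fin d → ℤ) ∈ ptrans (t x) N := by
      refine mem_ptrans.mpr ⟨a, ha, ?_⟩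
      rw [eq_sub_iff_add_eq, ← hza]
      conv_rhs => rw [← hn x]
      abel
    have h2 : z - (n x : Fin d → ℤ) ∈ ptrans (t y) N := by
      refine mem_ptrans.mpr ⟨b, hb, ?_⟩
      rw [eq_sub_iff_add_eq, ← hzb, hnxy]
      conv_rhs => rw [← hn y]
      abel
    have : z - (n x : Fin d → ℤ) ∈ ptrans (t x) N ∩ ptrans (t y) N := ⟨h1, h2⟩
    rw [hdisj] at this
    exact this
  · -- lower bound
    rintro m₀ ⟨σ, hσ⟩
    have hinj : ∀ a ∈ N, ∀ b ∈ N, σ a = σ b → a = b := by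
      intro a ha b hb hab
      by_contra hne
      have hdisj := hσ a b hne hab
      have h1 : a + b ∈ ptrans a N := mem_ptrans.mpr ⟨b, hb, rfl⟩
      have h2 : a + b ∈ ptrans b N := mem_ptrans.mpr ⟨a, ha, by rw [add_comm]⟩
      have : a + b ∈ ptrans a N ∩ ptrans b N := ⟨h1, h2⟩
      rw [hdisj] at this
      exact this
    calc m = N.card := hm.symm
      _ ≤ (Finset.univ : Finset (Fin m₀)).card :=
        Finset.card_le_card_of_injOn σ (fun _ _ => Finset.mem_univ _) hinj
      _ = m₀ := Finset.card_univ.trans (Fintype.card_fin m₀)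
end

section
/- Let T_1,…,T_r be a generalized tiling of Z^d with prototiles N_1,…,N_r, and let N = ⋃_k N_k = {n_1,…,n_m}. Define a schedule by assigning to each point t+n (t ∈ T_k, n ∈ N_k) the index of n in the enumeration of N. Then this schedule is collision-free: if two distinct points x ∈ t_k+N_k (t_k ∈ T_k) and y ∈ t_ℓ+N_ℓ (t_ℓ ∈ T_ℓ) are assigned the same slot, then (x+N_k) ∩ (y+N_ℓ) = ∅. -/
theorem generalized_tiling_schedule_collisionFree {d r m : ℕ}
    (N : Fin r → Finset (Fin d → ℤ)) (T : Fin r → Set (Fin d → ℤ))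
    (h0 : ∀ k, (0 : Fin d → ℤ) ∈ N k)
    (hne : ∀ k, (T k).Nonempty)
    (hdisjT : ∀ k ℓ : Fin r, k ≠ ℓ → Disjoint (T k) (T ℓ))
    (hGT1 : (⋃ k, ⋃ t ∈ T k, ptrans t (N k)) = Set.univ)
    (hGT2 : ∀ k ℓ : Fin r, ∀ s ∈ T k, ∀ t ∈ T ℓ, s ≠ t →
      ptrans s (N k) ∩ ptrans t (N ℓ) = ∅)
    (e : Fin m ≃ {n // n ∈ Finset.univ.biUnion N})
    (σ : (Fin d → ℤ) → Fin m)
    (hσ : ∀ k : Fin r, ∀ t ∈ T k, ∀ j : Fin m, (e j).1 ∈ N k → σ (t + (e j).1) = j) :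
    ∀ k ℓ : Fin r, ∀ tk ∈ T k, ∀ tℓ ∈ T ℓ,
      ∀ x ∈ ptrans tk (N k), ∀ y ∈ ptrans tℓ (N ℓ),
        x ≠ y → σ x = σ y → ptrans x (N k) ∩ ptrans y (N ℓ) = ∅ := by
  intro k ℓ tk htk tℓ htℓ x hx y hy hxy hσxy
  obtain ⟨n, hn, rfl⟩ := hx
  obtain ⟨n', hn', rfl⟩ := hy
  simp only at *
  -- identify n and n' as images under e
  have hnb : n ∈ Finset.univ.biUnion N := Finset.mem_biUnion.2 ⟨k, Finset.mem_univ _, hn⟩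
  have hn'b : n' ∈ Finset.univ.biUnion N := Finset.mem_biUnion.2 ⟨ℓ, Finset.mem_univ _, hn'⟩
  set j : Fin m := e.symm ⟨n, hnb⟩ with hj
  set j' : Fin m := e.symm ⟨n', hn'b⟩ with hj'
  have hej : (e j).1 = n := by rw [hj, Equiv.apply_symm_apply]
  have hej' : (e j').1 = n' := by rw [hj', Equiv.apply_symm_apply]
  have h1 : σ (tk + n) = j := by
    have := hσ k tk htk j (by rw [hej]; exact hn); rwa [hej] at this
  have h2 : σ (tℓ + n') = j' := by
    have := hσ ℓ tℓ htℓ j' (by rw [hej']; exact hn'); rwa [hej'] at this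
  have hjj' : j = j' := by rw [← h1, ← h2, hσxy]
  have hnn' : n = n' := by rw [← hej, ← hej', hjj']
  subst hnn'
  have htkℓ : tk ≠ tℓ := fun h => hxy (by rw [h])
  have hdisj := hGT2 k ℓ tk htk tℓ htℓ htkℓ
  ext z
  simp only [Set.mem_inter_iff, Set.mem_empty_iff_false, iff_false, not_and]
  rintro ⟨a, ha, rfl⟩ ⟨b, hb, hzb⟩
  have : (tk + a) ∈ ptrans tk (N k) ∩ ptrans tℓ (N ℓ) := by
    constructor
    · exact ⟨a, ha, rfl⟩
    · refine ⟨b, hb, ?_⟩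
      have : tℓ + n + b = tk + n + a := hzb
      have h3 : tℓ + b = tk + a := by
        funext i
        have := congrFun this i
        simp only [Pi.add_apply] at this ⊢
        omega
      exact h3
  rw [hdisj] at this
  exact this
end

section
/- In the setting of a respectable generalized tiling (N_1 ⊇ N_k for all k), any collision-free schedule requires at least |N_1| time slots: if σ : Z^d → Fin m₀ is such that any two distinct points assigned the same slot and whose interference neighborhoods (determined by the tiling as in D1) intersect do not exist, and some point p has neighborhood N_1 (i.e., p ∈ t+N_1 for t ∈ T_1), then m₀ ≥ |N_1|. -/
theorem respectable_tiling_lower_bound {d r m₀ : ℕ}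
    (N : Fin (r + 1) → Finset (Fin d → ℤ)) (T : Fin (r + 1) → Set (Fin d → ℤ))
    (h0 : ∀ k, (0 : Fin d → ℤ) ∈ N k)
    (hne : ∀ k, (T k).Nonempty)
    (hdisjT : ∀ k ℓ : Fin (r + 1), k ≠ ℓ → Disjoint (T k) (T ℓ))
    (hGT1 : (⋃ k, ⋃ t ∈ T k, ptrans t (N k)) = Set.univ)
    (hGT2 : ∀ k ℓ : Fin (r + 1), ∀ s ∈ T k, ∀ t ∈ T ℓ, s ≠ t →
      ptrans s (N k) ∩ ptrans t (N ℓ) = ∅)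
    (hresp : ∀ k, N k ⊆ N 0)
    (σ : (Fin d → ℤ) → Fin m₀)
    (hcf : ∀ k ℓ : Fin (r + 1), ∀ tk ∈ T k, ∀ tℓ ∈ T ℓ,
      ∀ x ∈ ptrans tk (N k), ∀ y ∈ ptrans tℓ (N ℓ),
        x ≠ y → σ x = σ y → ptrans x (N k) ∩ ptrans y (N ℓ) = ∅) :
    (N 0).card ≤ m₀ := by
  obtain ⟨t, ht⟩ := hne 0
  have hinj : Set.InjOn (fun n => σ (t + n)) ↑(N 0) := by
    intro a ha b hb hab
    by_contra hne'
    have hxy : t + a ≠ t + b := by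
      intro h; exact hne' (by simpa using congrArg (· - t) h)
    have hmem : (t + a + b) ∈ ptrans (t + a) (N 0) ∩ ptrans (t + b) (N 0) := by
      constructor
      · exact ⟨b, hb, rfl⟩
      · exact ⟨a, ha, by abel⟩
    have := hcf 0 0 t ht t ht (t + a) ⟨a, ha, rfl⟩ (t + b) ⟨b, hb, rfl⟩ hxy hab
    rw [this] at hmem
    exact hmem
  calc (N 0).card = ((N 0).image (fun n => σ (t + n))).card := by
        rw [Finset.card_image_of_injOn hinj]
    _ ≤ (Finset.univ : Finset (Fin m₀)).card := Finset.card_le_card (Finset.subset_univ _)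
    _ = m₀ := by simp
end

section
/- If T is a tiling of Z^d with prototile N and D ⊆ Z^d contains a translate of N+N = {n+n' : n,n' ∈ N}, then any collision-free schedule on D still requires at least |N| time slots. -/
theorem restricted_schedule_lower_bound {d m₀ : ℕ} (N : Finset (Fin d → ℤ))
    (h0 : (0 : Fin d → ℤ) ∈ N) (T : Set (Fin d → ℤ)) (hT : IsTiling T N)
    (D : Set (Fin d → ℤ)) (v : Fin d → ℤ)
    (hD : ∀ n ∈ N, ∀ n' ∈ N, v + (n + n') ∈ D)
    (σ : (Fin d → ℤ) → Fin m₀)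
    (hcf : ∀ x ∈ D, ∀ y ∈ D, x ≠ y → σ x = σ y →
      ptrans x N ∩ ptrans y N = ∅) :
    N.card ≤ m₀ := by
  have hinj : Function.Injective (fun n : N => σ (v + n)) := by
    rintro ⟨n, hn⟩ ⟨n', hn'⟩ h
    simp only at h
    by_contra hne
    have hne' : n ≠ n' := by simpa using hne
    have hxy : (v + n) ≠ (v + n') := fun he => hne' (by
      funext i; have := congrFun he i; simpa using this)
    have hdisj := hcf (v + n) (by simpa using hD n hn 0 h0)
      (v + n') (by simpa using hD n' hn' 0 h0) hxy h
    have hmem : (v + n + n') ∈ ptrans (v + n) N ∩ ptrans (v + n') N := by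
      refine ⟨⟨n', hn', rfl⟩, ⟨n, hn, ?_⟩⟩
      simp only
      rw [add_right_comm]
    rw [hdisj] at hmem
    exact hmem
  calc N.card = Fintype.card N := (Fintype.card_coe N).symm
    _ ≤ Fintype.card (Fin m₀) := Fintype.card_le_of_injective _ hinj
    _ = m₀ := Fintype.card_fin m₀
end
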